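/- arXiv:1111.0235 — 2 statements merged into one kernel-verified Lean document; each statement's English description precedes it below -/
import Mathlib

section
/- Let K = (a_{ij}) be an m×m complex matrix and let K_θ = E[M_σ K M_σ^*], where σ is a random permutation distributed according to the Ewens measure with parameter θ > 0. Then for every diagonal index i, (K_θ)_{ii} = ((θ−1)/(θ+m−1)) a_{ii} + (1/(θ+m−1)) Tr(K). -/
open Matrix

/-- The number of cycles of `σ` (including fixed points as 1-cycles). -/
def cycleCount {m : ℕ} (σ : Equiv.Perm (Fin m)) : ℕ :=
  (m - σ.support.card) + σ.cycleType.card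

/-- The Ewens measure with parameter `θ` on the symmetric group. -/
noncomputable def ewens {m : ℕ} (θ : ℝ) (σ : Equiv.Perm (Fin m)) : ℝ :=
  θ ^ cycleCount σ / ∏ k ∈ Finset.range m, (θ + k)

/-- The permutation matrix of `σ`, whose `i`-th row is the standard basis vector `e_{σ i}`. -/
def permMat {m : ℕ} (σ : Equiv.Perm (Fin m)) : Matrix (Fin m) (Fin m) ℂ :=
  Matrix.of fun i j => if j = σ i then 1 else 0

/-! Removing `i` from its cycle, `σ ↦ swap i (σ i) * σ`, produces a permutation fixing `i` with
exactly one more cycle. Hence, writing `Z(α) = ∑ σ, θ ^ #cycles(σ)` and `α' = α ∖ {i}`, the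
permutations with `σ i = i` have total weight `θ Z(α')` and, for each `j ≠ i`, those with
`σ i = j` have total weight `Z(α')`. Summing over `j` gives `Z(α) = (θ + |α| - 1) Z(α')`, so
`Z(Fin m) = θ (θ + 1) ⋯ (θ + m - 1)` is the Ewens normalisation, `σ i` equals `i` with
probability `θ / (θ + m - 1)` and each other `j` with probability `1 / (θ + m - 1)`, and the
formula follows from `(M_σ K M_σᴴ) i i = K (σ i) (σ i)`. -/

open Finset

namespace Equiv.Perm

variable {α : Type*} [Fintype α] [DecidableEq α]

def numCycles (σ : Perm α) : ℕ :=
  Fintype.card α - #σ.support + σ.cycleType.card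

@[simp]
theorem numCycles_one : numCycles (1 : Perm α) = Fintype.card α := by
  simp [numCycles]

theorem IsCycle.numCycles_add_card_support {c : Perm α} (hc : c.IsCycle) :
    numCycles c + #c.support = Fintype.card α + 1 := by
  have := c.support.card_le_univ
  rw [numCycles, hc.cycleType, Multiset.card_singleton]
  omega

theorem Disjoint.numCycles_mul_add_card {σ τ : Perm α} (h : Disjoint σ τ) :
    numCycles (σ * τ) + Fintype.card α = numCycles σ + numCycles τ := by
  have := h.card_support_mul ▸ (σ * τ).support.card_le_univ
  rw [numCycles, numCycles, numCycles, h.cycleType_mul, h.card_support_mul, Multiset.card_add]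
  omega

theorem numCycles_ofSubtype_add_card {p : α → Prop} [DecidablePred p] (g : Perm (Subtype p)) :
    numCycles (ofSubtype g) + Fintype.card (Subtype p) = numCycles g + Fintype.card α := by
  have hs : #(ofSubtype g).support = #g.support := by
    rw [← sum_cycleType, ← sum_cycleType, cycleType_ofSubtype]
  have := g.support.card_le_univ
  have := Fintype.card_le_of_injective _ (Subtype.val_injective (p := p))
  rw [numCycles, numCycles, hs, cycleType_ofSubtype]
  omega

theorem IsCycle.numCycles_swap_mul {c : Perm α} (hc : c.IsCycle) {x : α} (hx : c x ≠ x) :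
    numCycles (swap x (c x) * c) = numCycles c + 1 := by
  have hcx := hc.numCycles_add_card_support
  by_cases hx2 : c (c x) = x
  · have hswap := hc.eq_swap_of_apply_apply_eq_self hx hx2
    have h2 : #c.support = 2 := by rw [hswap]; exact card_support_swap hx.symm
    have h1 : swap x (c x) * c = 1 := by nth_rw 2 [hswap]; exact swap_mul_self _ _
    rw [h1, numCycles_one]
    omega
  · have hx' : x ∈ c.support := mem_support.mpr hx
    have := (hc.swap_mul hx hx2).numCycles_add_card_support
    rw [support_swap_mul_eq c x hx2, card_sdiff_of_subset (singleton_subset_iff.mpr hx'),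
      card_singleton] at this
    have := card_pos.mpr ⟨x, hx'⟩
    omega

theorem numCycles_swap_mul {σ : Perm α} {x : α} (hx : σ x ≠ x) :
    numCycles (swap x (σ x) * σ) = numCycles σ + 1 := by
  -- `σ = g * c` with `c` the cycle of `x` and `g` disjoint from it; the swap only acts on `c`.
  set c := σ.cycleOf x
  have hc : c.IsCycle := isCycle_cycleOf σ hx
  have hcx : c x = σ x := cycleOf_apply_self σ x
  have hxc : x ∈ c.support := mem_support.mpr (hcx ▸ hx)
  have hd : Disjoint (σ * c⁻¹) c :=
    disjoint_mul_inv_of_mem_cycleFactorsFinset (cycleOf_mem_cycleFactorsFinset_iff.mpr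
      (mem_support.mpr hx))
  have hds : Disjoint (σ * c⁻¹) (swap x (σ x)) := by
    refine hd.mono le_rfl ?_
    rw [support_swap hx.symm, ← hcx]
    exact insert_subset hxc (singleton_subset_iff.mpr (apply_mem_support.mpr hxc))
  have hσ : σ = σ * c⁻¹ * c := (inv_mul_cancel_right σ c).symm
  have hτ : swap x (σ x) * σ = σ * c⁻¹ * (swap x (c x) * c) := by
    rw [hcx, ← mul_assoc, hds.commute.eq, mul_assoc, ← hσ]
  have h1 := hd.numCycles_mul_add_card
  have h2 := (hds.mul_right hd).numCycles_mul_add_card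
  rw [← hσ] at h1
  rw [← hcx, ← hτ, hc.numCycles_swap_mul (mem_support.mp hxc)] at h2
  omega

theorem card_subtype_ne_add_one (i : α) : Fintype.card {x // x ≠ i} + 1 = Fintype.card α :=
  Fintype.card_option.symm.trans (Fintype.card_congr (optionSubtypeNe i))

theorem numCycles_ofSubtype_ne {i : α} (g : Perm {x // x ≠ i}) :
    numCycles (ofSubtype g) = numCycles g + 1 := by
  have := numCycles_ofSubtype_add_card g
  have := card_subtype_ne_add_one i
  omega

theorem numCycles_swap_mul_ofSubtype_ne {i j : α} (hij : j ≠ i) (g : Perm {x // x ≠ i}) :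
    numCycles (swap i j * ofSubtype g) = numCycles g := by
  have hj : (swap i j * ofSubtype g) i = j := by simp [ofSubtype_apply_of_not_mem]
  have := numCycles_swap_mul (x := i) (σ := swap i j * ofSubtype g) (by rw [hj]; exact hij)
  rw [hj, swap_mul_self_mul, numCycles_ofSubtype_ne] at this
  omega

variable {M : Type*} [AddCommMonoid M]

theorem sum_filter_apply_self_eq_sum_ofSubtype (i : α) (F : Perm α → M) :
    ∑ σ with σ i = i, F σ = ∑ g : Perm {x // x ≠ i}, F (ofSubtype g) := by
  rw [sum_subtype _ (p := fun σ : Perm α => σ i = i) (by simp)]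
  exact (((Perm.subtypeEquivSubtypePerm _).trans (subtypeEquivRight fun σ => by simp)).sum_comp
    (fun σ => F σ.1)).symm

theorem sum_filter_apply_eq_sum_swap_mul (i j : α) (F : Perm α → M) :
    ∑ σ with σ i = j, F σ = ∑ σ with σ i = i, F (swap i j * σ) := by
  refine (sum_equiv (Equiv.mulLeft (swap i j)) (fun σ => ?_) (fun _ _ => rfl)).symm
  simp [swap_apply_eq_iff]

variable {R : Type*} [CommSemiring R]

theorem sum_pow_numCycles_filter_apply_eq (θ : R) (i j : α) :
    ∑ σ with σ i = j, θ ^ numCycles σ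
      = (if j = i then θ else 1) * ∑ g : Perm {x // x ≠ i}, θ ^ numCycles g := by
  rw [sum_filter_apply_eq_sum_swap_mul, sum_filter_apply_self_eq_sum_ofSubtype]
  split_ifs with hji
  · subst hji
    simp [← one_def, numCycles_ofSubtype_ne, pow_succ', mul_sum]
  · simp [numCycles_swap_mul_ofSubtype_ne hji]

theorem sum_pow_numCycles_eq_mul (θ : R) (i : α) :
    ∑ σ : Perm α, θ ^ numCycles σ
      = (θ + Fintype.card {x // x ≠ i}) * ∑ g : Perm {x // x ≠ i}, θ ^ numCycles g := by
  rw [← sum_fiberwise univ (fun σ : Perm α => σ i), ← (optionSubtypeNe i).sum_comp,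
    Fintype.sum_option]
  have hne (x : {x // x ≠ i}) : (x : α) = i ↔ False := iff_false_intro x.2
  simp [sum_pow_numCycles_filter_apply_eq, hne, add_mul]

theorem sum_pow_numCycles_eq_prod (θ : R) :
    ∑ σ : Perm α, θ ^ numCycles σ = ∏ k ∈ range (Fintype.card α), (θ + k) := by
  obtain ⟨n, hn⟩ : ∃ n, Fintype.card α = n := ⟨_, rfl⟩
  induction n generalizing α with
  | zero =>
    have := Fintype.card_eq_zero_iff.mp hn
    rw [Fintype.sum_unique, Subsingleton.elim default 1, numCycles_one, hn]
    simp
  | succ n ih =>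
    obtain ⟨i⟩ := Fintype.card_pos_iff.mp (by rw [hn]; exact n.succ_pos)
    have hcard : Fintype.card {x // x ≠ i} = n := by
      have := card_subtype_ne_add_one i
      omega
    rw [sum_pow_numCycles_eq_mul θ i, ih hcard, hn, prod_range_succ, hcard, mul_comm]

end Equiv.Perm

open Equiv Perm

theorem cycleCount_eq_numCycles {m : ℕ} (σ : Perm (Fin m)) : cycleCount σ = σ.numCycles := by
  simp [cycleCount, numCycles]

theorem sum_ewens_filter_apply {m : ℕ} {θ : ℝ} (hθ : 0 < θ) (i j : Fin m) :
    ∑ σ with σ i = j, ewens θ σ = (if j = i then θ else 1) / (θ + m - 1) := by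
  have hZ : 0 < ∑ g : Perm {x // x ≠ i}, θ ^ numCycles g :=
    sum_pos (fun _ _ => pow_pos hθ _) univ_nonempty
  have hcard : (Fintype.card {x // x ≠ i} : ℝ) = m - 1 := by
    rw [eq_sub_iff_add_eq, ← Nat.cast_add_one, card_subtype_ne_add_one, Fintype.card_fin]
  have hprod := sum_pow_numCycles_eq_prod (α := Fin m) θ
  rw [Fintype.card_fin, sum_pow_numCycles_eq_mul θ i, hcard] at hprod
  simp only [ewens, cycleCount_eq_numCycles, ← sum_div, sum_pow_numCycles_filter_apply_eq, ← hprod]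
  rw [mul_div_mul_right _ _ hZ.ne', add_sub_assoc]

theorem permMat_mul_mul_conjTranspose_apply {m : ℕ} (σ : Perm (Fin m))
    (K : Matrix (Fin m) (Fin m) ℂ) (i j : Fin m) :
    (permMat σ * K * (permMat σ)ᴴ) i j = K (σ i) (σ j) := by
  simp [permMat, Matrix.mul_apply, Matrix.conjTranspose_apply]

theorem stmt_5 {m : ℕ} (θ : ℝ) (hθ : 0 < θ) (K : Matrix (Fin m) (Fin m) ℂ) (i : Fin m) :
    (∑ σ : Equiv.Perm (Fin m), ewens θ σ • (permMat σ * K * (permMat σ)ᴴ)) i i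
      = (((θ - 1) / (θ + m - 1) : ℝ) : ℂ) * K i i
        + ((1 / (θ + m - 1) : ℝ) : ℂ) * K.trace := by
  calc (∑ σ : Perm (Fin m), ewens θ σ • (permMat σ * K * (permMat σ)ᴴ)) i i
      = ∑ j, ((∑ σ with σ i = j, ewens θ σ : ℝ) : ℂ) * K j j := by
        simp only [Matrix.sum_apply, Matrix.smul_apply, permMat_mul_mul_conjTranspose_apply,
          Complex.real_smul, ← sum_fiberwise univ (fun σ : Perm (Fin m) => σ i),
          Complex.ofReal_sum, sum_mul]
        refine sum_congr rfl fun j _ => sum_congr rfl fun σ hσ => ?_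
        rw [(mem_filter.mp hσ).2]
    _ = ∑ j, (((1 / (θ + m - 1) : ℝ) : ℂ) * K j j
          + if j = i then (((θ - 1) / (θ + m - 1) : ℝ) : ℂ) * K i i else 0) := by
        refine sum_congr rfl fun j _ => ?_
        rw [sum_ewens_filter_apply hθ]
        split_ifs with hji
        · subst hji; push_cast; ring
        · simp
    _ = _ := by
        rw [sum_add_distrib, sum_ite_eq', if_pos (mem_univ i), ← mul_sum, add_comm]
        rfl
end

section
/- Let A = (a_{ij}) be an m×m matrix, p ≤ m, and K_{θ,m,p} = E[V_σ^T (V_σ A V_σ^T) V_σ], where σ is a random injection in S_{p,m} with distribution μ_{θ,m,p}(σ) = p_{θ,m}({σ̃ ∈ S_m : σ̃ restricted to {1,...,p} equals σ}). Then the diagonal entries satisfy (K_{θ,m,p})_{ii} = ((θ+p−1)/(θ+m−1)) a_{ii} for 1 ≤ i ≤ p and (K_{θ,m,p})_{ii} = (p/(θ+m−1)) a_{ii} for p+1 ≤ i ≤ m. -/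
/-!
The diagonal entry at `i` of `V_σᵀ (V_σ A V_σᵀ) V_σ` is `a_ii` if `i` lies in the image of `σ` and
`0` otherwise, so `(K_{θ,m,p})_ii = a_ii · Σ_{k ≤ p} P(τ(k) = i)` for an Ewens permutation `τ`.
Write `τ = (0 τ(0)) τ'` with `τ'` fixing `0`: transposing `0` with the next point of its cycle
cuts `0` out as a fixed point, so `τ` has one cycle fewer than `τ'` unless `τ(0) = 0`.
This recursion gives `Σ_τ θ^{K(τ)} = θ(θ+1)⋯(θ+m-1)` and, with conjugation invariance,
`P(τ(j) = i) = θ/(θ+m-1)` for `i = j` and `1/(θ+m-1)` otherwise.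
-/

open Matrix

/-- The measure on injections `{1,…,p} → {1,…,m}`: the Ewens probability of the set of
permutations of `{1,…,m}` whose restriction to `{1,…,p}` equals `σ`. -/
noncomputable def extMeasure {p m : ℕ} (h : p ≤ m) (θ : ℝ) (σ : Fin p ↪ Fin m) : ℝ :=
  ∑ τ ∈ Finset.univ.filter
      (fun τ : Equiv.Perm (Fin m) => ∀ i : Fin p, τ (Fin.castLE h i) = σ i),
    ewens θ τ

/-- The `p × m` matrix whose `i`-th row is the standard basis row vector `e_{σ i}`. -/
def Vmat {p m : ℕ} (σ : Fin p ↪ Fin m) : Matrix (Fin p) (Fin m) ℂ :=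
  Matrix.of fun i j => if j = σ i then 1 else 0

open Finset

namespace Equiv.Perm

variable {α : Type*} [Fintype α] [DecidableEq α]

theorem card_parts_partition (f : Perm α) :
    f.partition.parts.card = f.cycleType.card + (Fintype.card α - #f.support) := by
  rw [parts_partition, Multiset.card_add, Multiset.card_replicate]

theorem IsCycle.card_cycleType_swap_mul {c : Perm α} (hc : c.IsCycle) {x : α} (hx : c x ≠ x) :
    (swap x (c x) * c).cycleType.card + #c.support = #(swap x (c x) * c).support + 2 := by
  by_cases h2 : c (c x) = x
  · set y := c x
    have hswap : c = swap x y := hc.eq_swap_of_apply_apply_eq_self hx h2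
    rw [hswap, swap_mul_self, cycleType_one, support_one, card_support_swap hx.symm]
    rfl
  · rw [(hc.swap_mul hx h2).cycleType, support_swap_mul_eq c x h2,
      card_sdiff_of_subset (singleton_subset_iff.mpr (mem_support.mpr hx))]
    have : 1 ≤ #c.support := card_pos.mpr ⟨x, mem_support.mpr hx⟩
    simp only [Multiset.card_singleton, card_singleton]
    omega

/-- Only the cycle of `x` changes: it loses `x`, which becomes a fixed point. -/
theorem card_parts_partition_swap_mul {f : Perm α} {x : α} (hx : f x ≠ x) :
    (swap x (f x) * f).partition.parts.card = f.partition.parts.card + 1 := by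
  set c := f.cycleOf x
  have hc : c.IsCycle := f.isCycle_cycleOf hx
  have hcx : c x = f x := f.cycleOf_apply_self x
  have hρc : Disjoint (f * c⁻¹) c :=
    disjoint_mul_inv_of_mem_cycleFactorsFinset
      (cycleOf_mem_cycleFactorsFinset_iff.mpr (mem_support.mpr hx))
  set ρ := f * c⁻¹
  set c' := swap x (c x) * c
  have hρc' : Disjoint ρ c' :=
    hρc.mono le_rfl fun y hy => (mem_support_swap_mul_imp_mem_support_ne hy).1
  have hf : f = ρ * c := by simp [ρ]
  have hg : swap x (f x) * f = ρ * c' := by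
    rw [← hcx, hf, hρc.commute.eq, ← mul_assoc]
    exact hρc'.commute.eq.symm
  have hcut : c'.cycleType.card + #c.support = #c'.support + 2 :=
    hc.card_cycleType_swap_mul (hcx ▸ hx)
  have hle : #ρ.support + #c'.support ≤ Fintype.card α :=
    hρc'.card_support_mul ▸ card_le_univ _
  have hle' : #ρ.support + #c.support ≤ Fintype.card α :=
    hρc.card_support_mul ▸ card_le_univ _
  rw [card_parts_partition, card_parts_partition, hg, hf, hρc.cycleType_mul,
    hρc'.cycleType_mul, hρc.card_support_mul, hρc'.card_support_mul, Multiset.card_add,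
    Multiset.card_add, hc.cycleType, Multiset.card_singleton]
  omega

end Equiv.Perm

open Equiv Equiv.Perm

theorem Fintype.sum_ite_eq_add_card_sub_one_smul {ι M : Type*} [Fintype ι] [DecidableEq ι]
    [AddCommMonoid M] (j : ι) (a b : M) :
    ∑ i, (if i = j then a else b) = a + (Fintype.card ι - 1) • b := by
  rw [Fintype.sum_eq_add_sum_compl j, if_pos rfl,
    sum_ite_of_false fun i hi => by simpa using hi, sum_const, card_compl, card_singleton]

theorem Function.Embedding.sum_ite_apply_eq {ι α M : Type*} [Fintype ι] [DecidableEq α]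
    [AddCommMonoid M] (f : ι ↪ α) [DecidablePred (· ∈ Set.range f)] (a : α) (b : M) :
    ∑ k, (if f k = a then b else 0) = if a ∈ Set.range f then b else 0 := by
  classical
  by_cases ha : a ∈ Set.range f
  · obtain ⟨k, rfl⟩ := ha
    simp only [EmbeddingLike.apply_eq_iff_eq, Fintype.sum_ite_eq', Set.mem_range_self, if_true]
  · rw [if_neg ha]
    exact sum_eq_zero fun k _ => if_neg fun hk => ha ⟨k, hk⟩

theorem cycleCount_eq_card_parts_partition {m : ℕ} (σ : Perm (Fin m)) :
    cycleCount σ = σ.partition.parts.card := by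
  rw [card_parts_partition, Fintype.card_fin, cycleCount, add_comm]

theorem cycleCount_swap_mul {m : ℕ} {σ : Perm (Fin m)} {x : Fin m} (hx : σ x ≠ x) :
    cycleCount (swap x (σ x) * σ) = cycleCount σ + 1 := by
  simp only [cycleCount_eq_card_parts_partition, card_parts_partition_swap_mul hx]

theorem cycleCount_conj {m : ℕ} (π σ : Perm (Fin m)) :
    cycleCount (π * σ * π⁻¹) = cycleCount σ := by
  rw [cycleCount_eq_card_parts_partition, cycleCount_eq_card_parts_partition,
    partition_eq_of_isConj.mp (isConj_iff.mpr ⟨π, rfl⟩).symm]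

theorem decomposeFin_symm_zero {n : ℕ} (e : Perm (Fin n)) :
    decomposeFin.symm (0, e) = e.extendDomain (finSuccAboveEquiv 0) := by
  ext x
  refine Fin.cases ?_ (fun i => ?_) x
  · rw [decomposeFin_symm_apply_zero, extendDomain_apply_not_subtype _ _ (by simp)]
  · have hi : ((finSuccAboveEquiv 0 i : {x : Fin (n + 1) // x ≠ 0}) : Fin (n + 1)) = i.succ := by
      simp [finSuccAboveEquiv_apply]
    rw [decomposeFin_symm_apply_succ, ← hi, extendDomain_apply_image]
    simp [finSuccAboveEquiv_apply]

theorem decomposeFin_symm_eq_swap_mul {n : ℕ} (p : Fin (n + 1)) (e : Perm (Fin n)) :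
    decomposeFin.symm (p, e) = swap 0 p * decomposeFin.symm (0, e) := by
  ext x
  refine Fin.cases ?_ (fun i => ?_) x
  · simp
  · simp [decomposeFin_symm_apply_succ]

theorem cycleCount_decomposeFin_symm {n : ℕ} (p : Fin (n + 1)) (e : Perm (Fin n)) :
    cycleCount (decomposeFin.symm (p, e)) = cycleCount e + if p = 0 then 1 else 0 := by
  have hzero : cycleCount (decomposeFin.symm (0, e)) = cycleCount e + 1 := by
    have := card_le_univ e.support
    rw [Fintype.card_fin] at this
    rw [decomposeFin_symm_zero, cycleCount, cycleCount, cycleType_extendDomain,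
      card_support_extend_domain]
    omega
  split_ifs with hp
  · rw [hp, hzero]
  · have hτ0 : decomposeFin.symm (p, e) 0 = p := decomposeFin_symm_apply_zero p e
    have hcut := cycleCount_swap_mul (hτ0.trans_ne hp)
    have hσ : swap 0 p * decomposeFin.symm (p, e) = decomposeFin.symm (0, e) := by
      rw [decomposeFin_symm_eq_swap_mul p e, ← mul_assoc, Equiv.swap_mul_self, one_mul]
    rw [hτ0, hσ, hzero] at hcut
    omega

theorem pow_cycleCount_decomposeFin_symm (θ : ℝ) {n : ℕ} (p : Fin (n + 1)) (e : Perm (Fin n)) :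
    θ ^ cycleCount (decomposeFin.symm (p, e)) = (if p = 0 then θ else 1) * θ ^ cycleCount e := by
  rw [cycleCount_decomposeFin_symm, pow_add, mul_comm]
  split_ifs <;> simp

theorem sum_pow_cycleCount (θ : ℝ) : ∀ n : ℕ,
    ∑ τ : Perm (Fin n), θ ^ cycleCount τ = ∏ k ∈ range n, (θ + k)
  | 0 => by simp [cycleCount]
  | n + 1 => by
    rw [← decomposeFin.symm.sum_comp, Fintype.sum_prod_type]
    simp only [pow_cycleCount_decomposeFin_symm, ← mul_sum, ← sum_mul, sum_pow_cycleCount θ n,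
      Fintype.sum_ite_eq_add_card_sub_one_smul, prod_range_succ, Fintype.card_fin]
    simp [mul_comm]

theorem sum_pow_cycleCount_apply_zero_eq (θ : ℝ) {n : ℕ} (i : Fin (n + 1)) :
    ∑ τ : Perm (Fin (n + 1)) with τ 0 = i, θ ^ cycleCount τ
      = (if i = 0 then θ else 1) * ∏ k ∈ range n, (θ + k) := by
  rw [sum_filter, ← decomposeFin.symm.sum_comp, Fintype.sum_prod_type]
  simp only [decomposeFin_symm_apply_zero, sum_ite_irrel, sum_const_zero, Fintype.sum_ite_eq',
    pow_cycleCount_decomposeFin_symm, ← mul_sum, sum_pow_cycleCount]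

theorem sum_pow_cycleCount_apply_eq (θ : ℝ) {n : ℕ} (j i : Fin (n + 1)) :
    ∑ τ : Perm (Fin (n + 1)) with τ j = i, θ ^ cycleCount τ
      = (if i = j then θ else 1) * ∏ k ∈ range n, (θ + k) := by
  set π := swap 0 j
  have hπ : π⁻¹ = π := swap_inv 0 j
  calc ∑ τ : Perm (Fin (n + 1)) with τ j = i, θ ^ cycleCount τ
      = ∑ τ : Perm (Fin (n + 1)) with τ 0 = π i, θ ^ cycleCount τ := by
        refine sum_equiv (MulAut.conj π).toEquiv (fun τ => ?_) (fun τ _ => ?_)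
        · simp [hπ, π]
        · simp [cycleCount_conj]
    _ = (if i = j then θ else 1) * ∏ k ∈ range n, (θ + k) := by
        simp only [sum_pow_cycleCount_apply_zero_eq, π, swap_apply_eq_iff, swap_apply_left]

theorem sum_ewens_apply_eq {θ : ℝ} (hθ : 0 < θ) {n : ℕ} (j i : Fin (n + 1)) :
    ∑ τ : Perm (Fin (n + 1)) with τ j = i, ewens θ τ = (if i = j then θ else 1) / (θ + n) := by
  have hprod : ∏ k ∈ range n, (θ + k) ≠ 0 := prod_ne_zero_iff.mpr fun k _ => by positivity
  simp only [ewens, ← sum_div, sum_pow_cycleCount_apply_eq, prod_range_succ]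
  rw [mul_comm _ (θ + n), mul_div_mul_right _ _ hprod]

theorem Vmat_transpose_mul_Vmat {p m : ℕ} (σ : Fin p ↪ Fin m) :
    (Vmat σ)ᵀ * Vmat σ = diagonal fun j => if j ∈ Set.range σ then 1 else 0 := by
  ext j k
  rw [Matrix.mul_apply, diagonal_apply]
  simp only [transpose_apply, Vmat, of_apply]
  by_cases hj : j ∈ Set.range σ
  · obtain ⟨l, rfl⟩ := hj
    rw [sum_eq_single l (fun l' _ hl' => by simp [σ.injective.ne (Ne.symm hl')]) (by simp)]
    simp [eq_comm]
  · rw [if_neg hj, ite_self]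
    exact sum_eq_zero fun l _ => by simp [show j ≠ σ l from fun h => hj ⟨l, h.symm⟩]

theorem Vmat_conj_apply_self {p m : ℕ} (σ : Fin p ↪ Fin m) (A : Matrix (Fin m) (Fin m) ℂ)
    (i : Fin m) :
    ((Vmat σ)ᵀ * (Vmat σ * A * (Vmat σ)ᵀ) * Vmat σ) i i = if i ∈ Set.range σ then A i i else 0 := by
  have hassoc : (Vmat σ)ᵀ * (Vmat σ * A * (Vmat σ)ᵀ) * Vmat σ
      = (Vmat σ)ᵀ * Vmat σ * A * ((Vmat σ)ᵀ * Vmat σ) := by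
    simp only [Matrix.mul_assoc]
  rw [hassoc, Vmat_transpose_mul_Vmat, mul_diagonal, diagonal_mul]
  split_ifs <;> simp

theorem sum_extMeasure_mul {p m : ℕ} (h : p ≤ m) (θ : ℝ) (F : (Fin p ↪ Fin m) → ℝ) :
    ∑ σ, extMeasure h θ σ * F σ
      = ∑ τ : Perm (Fin m), ewens θ τ * F ((Fin.castLEEmb h).trans τ.toEmbedding) := by
  rw [← sum_fiberwise univ fun τ : Perm (Fin m) => (Fin.castLEEmb h).trans τ.toEmbedding]
  refine sum_congr rfl fun σ _ => ?_
  rw [extMeasure, sum_mul]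
  refine sum_congr (filter_congr fun τ _ => ?_) fun τ hτ => ?_
  · simp [DFunLike.ext_iff]
  · rw [(mem_filter.mp hτ).2]

theorem sum_extMeasure_mul_indicator_range {p m : ℕ} (h : p ≤ m) {θ : ℝ} (hθ : 0 < θ)
    (i : Fin m) :
    ∑ σ, extMeasure h θ σ * (if i ∈ Set.range σ then 1 else 0)
      = if (i : ℕ) < p then (θ + p - 1) / (θ + m - 1) else p / (θ + m - 1) := by
  obtain ⟨n, rfl⟩ : ∃ n, m = n + 1 := ⟨m - 1, by have := i.pos; omega⟩
  rw [sum_extMeasure_mul]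
  simp only [← Function.Embedding.sum_ite_apply_eq, mul_sum, mul_ite,
    mul_one, mul_zero, Function.Embedding.trans_apply, Fin.castLEEmb_apply,
    Equiv.coe_toEmbedding]
  rw [sum_comm]
  simp only [← sum_filter, sum_ewens_apply_eq hθ, ← sum_div]
  split_ifs with hi
  · have hk : ∀ k : Fin p, i = Fin.castLE h k ↔ k = ⟨i, hi⟩ := by
      simp [Fin.ext_iff, eq_comm]
    simp only [hk, Fintype.sum_ite_eq_add_card_sub_one_smul, Fintype.card_fin, nsmul_eq_mul,
      mul_one]
    rw [Nat.cast_sub (by omega)]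
    push_cast
    ring_nf
  · have hk : ∀ k : Fin p, i ≠ Fin.castLE h k := fun k hik => hi (hik ▸ k.isLt)
    simp only [hk, if_false, sum_const, card_univ, Fintype.card_fin, nsmul_eq_mul, mul_one]
    push_cast
    ring_nf

theorem stmt_12 {p m : ℕ} (h : p ≤ m) (θ : ℝ) (hθ : 0 < θ)
    (A : Matrix (Fin m) (Fin m) ℂ) (i : Fin m) :
    (∑ σ : Fin p ↪ Fin m,
        extMeasure h θ σ • ((Vmat σ)ᵀ * (Vmat σ * A * (Vmat σ)ᵀ) * Vmat σ)) i i
      = if (i : ℕ) < p then (((θ + p - 1) / (θ + m - 1) : ℝ) : ℂ) * A i i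
        else ((p / (θ + m - 1) : ℝ) : ℂ) * A i i := by
  have hentry : ∀ σ : Fin p ↪ Fin m,
      (extMeasure h θ σ • ((Vmat σ)ᵀ * (Vmat σ * A * (Vmat σ)ᵀ) * Vmat σ)) i i
        = ((extMeasure h θ σ * if i ∈ Set.range σ then 1 else 0 : ℝ) : ℂ) * A i i := by
    intro σ
    rw [Matrix.smul_apply, Vmat_conj_apply_self]
    split_ifs <;> simp [Complex.real_smul]
  rw [Matrix.sum_apply]
  simp only [hentry]
  rw [← sum_mul, ← Complex.ofReal_sum, sum_extMeasure_mul_indicator_range h hθ]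
  split_ifs <;> rfl
end
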